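/- Let n ≥ 2 and let S_n be the n×n shift matrix. The numerical range W(S_n) = {⟨S_n x, x⟩ : x ∈ ℂ^n, ‖x‖ ≤ 1} equals the closed disc {z ∈ ℂ : |z| ≤ cos(π/(n+1))}, and consequently the numerical radius satisfies ω(S_n) = cos(π/(n+1)). -/

import Mathlib

open Matrix

noncomputable section

/-- The `n × n` nilpotent shift matrix: `(S_n)_{ij} = 1` if `i = j + 1`, else `0`. -/
def shiftMatrix (n : ℕ) : Matrix (Fin n) (Fin n) ℂ :=
  Matrix.of fun i j => if (i : ℕ) = (j : ℕ) + 1 then 1 else 0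

/-- The rank-`k` numerical range of a square complex matrix `T`:
all `λ` such that `P * T * P = λ • P` for some orthogonal projection `P` of rank `k`. -/
def rankNumRange {m : Type*} [Fintype m] (k : ℕ) (T : Matrix m m ℂ) : Set ℂ :=
  {lam : ℂ | ∃ P : Matrix m m ℂ,
    P * P = P ∧ Pᴴ = P ∧ P.rank = k ∧ P * T * P = lam • P}

/-- The numerical range of a square complex matrix:
`W(T) = {⟨Tx, x⟩ : ‖x‖ ≤ 1}`. -/
def numRange {N : ℕ} (T : Matrix (Fin N) (Fin N) ℂ) : Set ℂ :=
  {z : ℂ | ∃ x : Fin N → ℂ, ∑ i, ‖x i‖ ^ 2 ≤ 1 ∧ z = star x ⬝ᵥ (T *ᵥ x)}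

/-!
Conjugating `S_n` by `diag(w̄^k)` multiplies it by any unimodular `w`, and shrinking `x`
multiplies `⟨S_n x, x⟩` by any `t ∈ [0, 1]`; so `W(S_n)` is the closed disc whose radius is
the largest real point of `W(S_n)`. With `θ = π/(n+1)` and `d_k = sin kθ`, the recurrence
`d_k + d_{k+2} = 2 cos θ d_{k+1}` and `d_0 = d_{n+1} = 0` give the sum of squares
`cos θ ∑ a_k² - ∑ a_k a_{k+1} = ∑ (d_{k+2} a_k - d_{k+1} a_{k+1})² / (2 d_{k+1} d_{k+2})`.
Hence `|⟨S_n x, x⟩| ≤ ∑ |x_k| |x_{k+1}| ≤ cos θ ‖x‖²`, with equality at `x_k = d_{k+1}`.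
-/

open Real Finset

section NumRange

variable {N : ℕ} (T : Matrix (Fin N) (Fin N) ℂ)

theorem ofReal_sq_mul_mem_numRange (x : Fin N → ℂ) (r : ℝ)
    (hr : r ^ 2 * ∑ i, ‖x i‖ ^ 2 ≤ 1) :
    ((r ^ 2 : ℝ) : ℂ) * (star x ⬝ᵥ (T *ᵥ x)) ∈ numRange T := by
  refine ⟨(r : ℂ) • x, ?_, ?_⟩
  · simpa [norm_mul, mul_pow, Finset.mul_sum] using hr
  · simp [mulVec_smul, star_smul, pow_two, mul_assoc]

theorem ofReal_mul_mem_numRange {z : ℂ} (hz : z ∈ numRange T) {t : ℝ} (ht₀ : 0 ≤ t)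
    (ht₁ : t ≤ 1) : (t : ℂ) * z ∈ numRange T := by
  obtain ⟨x, hx, rfl⟩ := hz
  have h := ofReal_sq_mul_mem_numRange T x √t
    (by rw [sq_sqrt ht₀]; exact mul_le_one₀ ht₁ (by positivity) hx)
  rwa [sq_sqrt ht₀] at h

theorem div_sum_norm_sq_mem_numRange (x : Fin N → ℂ) :
    star x ⬝ᵥ (T *ᵥ x) / ((∑ i, ‖x i‖ ^ 2 : ℝ) : ℂ) ∈ numRange T := by
  have hS : 0 ≤ ∑ i, ‖x i‖ ^ 2 := by positivity
  have h := ofReal_sq_mul_mem_numRange T x (√(∑ i, ‖x i‖ ^ 2))⁻¹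
    (by rw [inv_pow, sq_sqrt hS]; exact inv_mul_le_one_of_le₀ le_rfl hS)
  rwa [inv_pow, sq_sqrt hS, Complex.ofReal_inv, inv_mul_eq_div] at h

end NumRange

def sinWeight (m k : ℕ) : ℝ := sin (k * (π / (m + 2)))

namespace sinWeight

variable (m : ℕ)

theorem zero : sinWeight m 0 = 0 := by simp [sinWeight]

theorem self_add_two : sinWeight m (m + 2) = 0 := by
  rw [sinWeight, Nat.cast_add, Nat.cast_two, mul_div_cancel₀ _ (by positivity), sin_pi]

theorem pos {k : ℕ} (hk₀ : 1 ≤ k) (hk : k ≤ m + 1) : 0 < sinWeight m k := by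
  have hk' : (k : ℝ) < m + 2 := by norm_cast; omega
  apply sin_pos_of_pos_of_lt_pi (by positivity)
  rw [mul_div_assoc', div_lt_iff₀ (by positivity), mul_comm]
  exact mul_lt_mul_of_pos_left hk' pi_pos

theorem add_add_two (k : ℕ) :
    sinWeight m k + sinWeight m (k + 2) = 2 * cos (π / (m + 2)) * sinWeight m (k + 1) := by
  simp only [sinWeight]
  push_cast
  rw [show (k : ℝ) * (π / (m + 2)) = (k + 1) * (π / (m + 2)) - π / (m + 2) by ring,
    show ((k : ℝ) + 2) * (π / (m + 2)) = (k + 1) * (π / (m + 2)) + π / (m + 2) by ring,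
    sin_sub, sin_add]
  ring

end sinWeight

theorem cos_pi_div_nat_add_two_nonneg (m : ℕ) : 0 ≤ cos (π / (m + 2)) :=
  cos_nonneg_of_mem_Icc ⟨by linarith [pi_pos, div_pos pi_pos (by positivity : (0 : ℝ) < m + 2)],
    div_le_div_of_nonneg_left pi_pos.le two_pos (by linarith [m.cast_nonneg (α := ℝ)])⟩

theorem cos_mul_sum_sq_sub_sum_mul_succ (m : ℕ) (a : ℕ → ℝ) :
    cos (π / (m + 2)) * ∑ k ∈ range (m + 1), a k ^ 2 - ∑ k ∈ range m, a k * a (k + 1) =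
      ∑ k ∈ range m, (sinWeight m (k + 2) * a k - sinWeight m (k + 1) * a (k + 1)) ^ 2 /
        (2 * sinWeight m (k + 1) * sinWeight m (k + 2)) := by
  set d := sinWeight m
  have hterm : ∀ k ∈ range m,
      (d (k + 2) * a k - d (k + 1) * a (k + 1)) ^ 2 / (2 * d (k + 1) * d (k + 2)) =
        d (k + 2) / (2 * d (k + 1)) * a k ^ 2 + d (k + 1) / (2 * d (k + 2)) * a (k + 1) ^ 2
          - a k * a (k + 1) := by
    intro k hk
    have h₁ : d (k + 1) ≠ 0 := (sinWeight.pos m (by omega) (by simp at hk; omega)).ne'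
    have h₂ : d (k + 2) ≠ 0 := (sinWeight.pos m (by omega) (by simp at hk; omega)).ne'
    field_simp
    ring
  have hright : ∑ k ∈ range m, d (k + 2) / (2 * d (k + 1)) * a k ^ 2 =
      ∑ k ∈ range (m + 1), d (k + 2) / (2 * d (k + 1)) * a k ^ 2 := by
    simp [sum_range_succ, d, sinWeight.self_add_two]
  have hleft : ∑ k ∈ range m, d (k + 1) / (2 * d (k + 2)) * a (k + 1) ^ 2 =
      ∑ k ∈ range (m + 1), d k / (2 * d (k + 1)) * a k ^ 2 := by
    simp [sum_range_succ' _ m, d, sinWeight.zero]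
  have hcos : ∀ k ∈ range (m + 1),
      d (k + 2) / (2 * d (k + 1)) * a k ^ 2 + d k / (2 * d (k + 1)) * a k ^ 2 =
        cos (π / (m + 2)) * a k ^ 2 := by
    intro k hk
    have h₁ : d (k + 1) ≠ 0 := (sinWeight.pos m (by omega) (by simp at hk; omega)).ne'
    have hrec := sinWeight.add_add_two m k
    field_simp
    linear_combination a k ^ 2 * hrec
  rw [sum_congr rfl hterm, sum_sub_distrib, sum_add_distrib, hright, hleft, ← sum_add_distrib,
    sum_congr rfl hcos, mul_sum]

theorem sum_mul_succ_le_cos_mul_sum_sq (m : ℕ) (a : ℕ → ℝ) :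
    ∑ k ∈ range m, a k * a (k + 1) ≤ cos (π / (m + 2)) * ∑ k ∈ range (m + 1), a k ^ 2 := by
  rw [← sub_nonneg, cos_mul_sum_sq_sub_sum_mul_succ]
  refine sum_nonneg fun k hk => ?_
  have := sinWeight.pos m (k := k + 1) (by omega) (by simp at hk; omega)
  have := sinWeight.pos m (k := k + 2) (by omega) (by simp at hk; omega)
  positivity

theorem sum_sinWeight_mul_succ (m : ℕ) :
    ∑ k ∈ range m, sinWeight m (k + 1) * sinWeight m (k + 2) =
      cos (π / (m + 2)) * ∑ k ∈ range (m + 1), sinWeight m (k + 1) ^ 2 := by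
  have h := cos_mul_sum_sq_sub_sum_mul_succ m (fun k => sinWeight m (k + 1))
  simp only [mul_comm (sinWeight m (_ + 2)), sub_self, ne_eq, OfNat.ofNat_ne_zero,
    not_false_eq_true, zero_pow, zero_div, sum_const_zero] at h
  linarith

section Shift

variable {m : ℕ} (x : Fin (m + 1) → ℂ)

theorem shiftMatrix_mulVec_zero : (shiftMatrix (m + 1) *ᵥ x) 0 = 0 := by
  simp [mulVec, dotProduct, shiftMatrix]

theorem shiftMatrix_mulVec_succ (i : Fin m) :
    (shiftMatrix (m + 1) *ᵥ x) i.succ = x i.castSucc := by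
  rw [mulVec, dotProduct, Finset.sum_eq_single i.castSucc]
  · simp [shiftMatrix]
  · intro j _ hj
    simp [shiftMatrix, Fin.ext_iff] at hj ⊢
    omega
  · simp

theorem star_dotProduct_shiftMatrix_mulVec :
    star x ⬝ᵥ (shiftMatrix (m + 1) *ᵥ x) = ∑ i : Fin m, star (x i.succ) * x i.castSucc := by
  simp [dotProduct, Fin.sum_univ_succ, shiftMatrix_mulVec_zero, shiftMatrix_mulVec_succ]

end Shift

theorem mul_mem_numRange_shiftMatrix {n : ℕ} {w z : ℂ} (hw : ‖w‖ = 1)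
    (hz : z ∈ numRange (shiftMatrix n)) : w * z ∈ numRange (shiftMatrix n) := by
  obtain ⟨x, hx, rfl⟩ := hz
  have hww : star w * w = 1 := by
    rw [Complex.star_def, Complex.conj_mul', hw]; norm_num
  refine ⟨fun i => star w ^ (i : ℕ) * x i, by simpa [hw] using hx, ?_⟩
  simp only [dotProduct, mulVec, shiftMatrix, of_apply, Pi.star_apply, Finset.mul_sum]
  refine Finset.sum_congr rfl fun i _ => Finset.sum_congr rfl fun j _ => ?_
  split_ifs with hij
  · have hpow : w ^ (j : ℕ) * star w ^ (j : ℕ) = 1 := by rw [← mul_pow, mul_comm, hww, one_pow]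
    simp only [star_mul, star_pow, star_star, hij, pow_succ]
    linear_combination -(w * star (x i) * x j) * hpow
  · simp

theorem norm_le_cos_of_mem_numRange_shiftMatrix {m : ℕ} {z : ℂ}
    (hz : z ∈ numRange (shiftMatrix (m + 1))) : ‖z‖ ≤ cos (π / (m + 2)) := by
  obtain ⟨x, hx, rfl⟩ := hz
  set a : ℕ → ℝ := fun k => if h : k < m + 1 then ‖x ⟨k, h⟩‖ else 0
  have ha : ∀ i : Fin (m + 1), a i = ‖x i‖ := fun i => dif_pos i.isLt
  calc ‖star x ⬝ᵥ (shiftMatrix (m + 1) *ᵥ x)‖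
      ≤ ∑ i : Fin m, ‖x i.castSucc‖ * ‖x i.succ‖ := by
        rw [star_dotProduct_shiftMatrix_mulVec]
        refine (norm_sum_le _ _).trans_eq (sum_congr rfl fun i _ => ?_)
        rw [norm_mul, norm_star, mul_comm]
    _ = ∑ k ∈ range m, a k * a (k + 1) := by
        rw [← Fin.sum_univ_eq_sum_range]
        refine sum_congr rfl fun i _ => ?_
        rw [← ha, ← ha]; rfl
    _ ≤ cos (π / (m + 2)) * ∑ k ∈ range (m + 1), a k ^ 2 := sum_mul_succ_le_cos_mul_sum_sq m a
    _ = cos (π / (m + 2)) * ∑ i, ‖x i‖ ^ 2 := by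
        rw [← Fin.sum_univ_eq_sum_range (fun k => a k ^ 2)]
        simp only [ha]
    _ ≤ cos (π / (m + 2)) := mul_le_of_le_one_right (cos_pi_div_nat_add_two_nonneg m) hx

theorem cos_mem_numRange_shiftMatrix (m : ℕ) :
    (cos (π / (m + 2)) : ℂ) ∈ numRange (shiftMatrix (m + 1)) := by
  set y : Fin (m + 1) → ℂ := fun i => sinWeight m (i + 1)
  have hsum : ∑ i, ‖y i‖ ^ 2 = ∑ k ∈ range (m + 1), sinWeight m (k + 1) ^ 2 := by
    rw [← Fin.sum_univ_eq_sum_range (fun k => sinWeight m (k + 1) ^ 2)]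
    simp [y, Complex.norm_real, sq_abs]
  have hpos : 0 < ∑ k ∈ range (m + 1), sinWeight m (k + 1) ^ 2 :=
    sum_pos (fun k hk => pow_pos (sinWeight.pos m (by omega) (by simp at hk; omega)) 2)
      nonempty_range_add_one
  have hq : star y ⬝ᵥ (shiftMatrix (m + 1) *ᵥ y) =
      ((cos (π / (m + 2)) * ∑ k ∈ range (m + 1), sinWeight m (k + 1) ^ 2 : ℝ) : ℂ) := by
    rw [star_dotProduct_shiftMatrix_mulVec, ← sum_sinWeight_mul_succ, Complex.ofReal_sum,
      ← Fin.sum_univ_eq_sum_range]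
    simp [y, mul_comm]
  have h := div_sum_norm_sq_mem_numRange (shiftMatrix (m + 1)) y
  rwa [hq, hsum, ← Complex.ofReal_div, mul_div_cancel_right₀ _ hpos.ne'] at h

theorem numRange_shiftMatrix (m : ℕ) :
    numRange (shiftMatrix (m + 1)) = {z : ℂ | ‖z‖ ≤ cos (π / (m + 2))} := by
  refine Set.Subset.antisymm (fun z => norm_le_cos_of_mem_numRange_shiftMatrix) fun z hz => ?_
  set c := cos (π / (m + 2))
  have hc : 0 ≤ c := cos_pi_div_nat_add_two_nonneg m
  have hpolar : z = ((‖z‖ / c : ℝ) : ℂ) * (Complex.exp (z.arg * Complex.I) * c) := by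
    rcases hc.eq_or_lt with hc0 | hc0
    · have : z = 0 := norm_le_zero_iff.mp (hc0 ▸ hz)
      simp [this]
    · have : (c : ℂ) ≠ 0 := Complex.ofReal_ne_zero.mpr hc0.ne'
      conv_lhs => rw [← Complex.norm_mul_exp_arg_mul_I z]
      push_cast
      field_simp
  rw [hpolar]
  exact ofReal_mul_mem_numRange _
    (mul_mem_numRange_shiftMatrix (Complex.norm_exp_ofReal_mul_I _)
      (cos_mem_numRange_shiftMatrix m))
    (by positivity) (div_le_one_of_le₀ hz hc)

open Real in
theorem numRange_shiftMatrix_eq_closedDisc_and_numRadius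
    (n : ℕ) (hn : 2 ≤ n) :
    numRange (shiftMatrix n) = {z : ℂ | ‖z‖ ≤ cos (π / (n + 1))} ∧
    sSup {r : ℝ | ∃ z ∈ numRange (shiftMatrix n), r = ‖z‖}
      = cos (π / (n + 1)) := by
  obtain ⟨m, rfl⟩ : ∃ m, n = m + 1 := ⟨n - 1, by omega⟩
  have hθ : π / (((m + 1 : ℕ) : ℝ) + 1) = π / (m + 2) := by push_cast; ring
  rw [hθ]
  refine ⟨numRange_shiftMatrix m, IsGreatest.csSup_eq ⟨⟨_, cos_mem_numRange_shiftMatrix m, ?_⟩, ?_⟩⟩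
  · rw [Complex.norm_real, norm_of_nonneg (cos_pi_div_nat_add_two_nonneg m)]
  · rintro r ⟨z, hz, rfl⟩
    exact norm_le_cos_of_mem_numRange_shiftMatrix hz
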